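/- arXiv:1705.03047 — 2 statements merged into one kernel-verified Lean document; each statement's English description precedes it below -/
import Mathlib

section
/- Let a : [0,T] → ℝ be Lipschitz continuous with a(t) ≥ a₀ > 0 for all t, and let β > 0. If v : [0,T] → ℂ is a C² solution of v''(t) + β² a(t) v(t) = 0, then there exists a constant C > 0 (depending on a and T but not on β, v) such that for all t ∈ [0,T]: β²|v(t)|² + |v'(t)|² ≤ C (β²|v(0)|² + |v'(0)|²). -/
/-!
The energy `E(t) = a(t) β² |v|² + |v'|²` would satisfy `E' = a' β² |v|² ≤ (L / a₀) E` if `a`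
were differentiable, because freezing the coefficient at `a(t)` makes the ODE conservative. For a
merely Lipschitz `a` the same computation bounds the right Dini derivative of `E`, which is all
Gronwall's inequality needs; comparing `E` with `β² |v|² + |v'|²` at both ends gives the constant.
-/

open Set Filter Topology
open scoped NNReal

theorem min_mul_add_le_mul_add {b c p q : ℝ} (hcb : c ≤ b) (hp : 0 ≤ p) (hq : 0 ≤ q) :
    min c 1 * (p + q) ≤ b * p + q := by
  nlinarith [min_le_left c 1, min_le_right c 1]

theorem mul_add_le_max_mul_add {b p q : ℝ} (hp : 0 ≤ p) (hq : 0 ≤ q) :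
    b * p + q ≤ max b 1 * (p + q) := by
  nlinarith [le_max_left b 1, le_max_right b 1]

theorem LipschitzOnWith.slope_le {f : ℝ → ℝ} {L : ℝ≥0} {s : Set ℝ} (hf : LipschitzOnWith L f s)
    {x z : ℝ} (hx : x ∈ s) (hz : z ∈ s) : slope f x z ≤ L := by
  rw [slope_def_field]
  calc (f z - f x) / (z - x) ≤ |(f z - f x) / (z - x)| := le_abs_self _
    _ = dist (f z) (f x) / dist z x := by rw [abs_div]; rfl
    _ ≤ L := div_le_of_le_mul₀ dist_nonneg L.coe_nonneg (hf.dist_le_mul z hz x hx)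

theorem eventually_slope_mul_add_lt {a p q : ℝ → ℝ} {p' q' x r : ℝ} {L : ℝ≥0} {s : Set ℝ}
    (ha : LipschitzOnWith L a s) (hx : x ∈ s) (hs : s ∈ 𝓝[>] x)
    (hp : HasDerivAt p p' x) (hq : HasDerivAt q q' x) (hpx : 0 ≤ p x)
    (hr : a x * p' + q' + L * p x < r) :
    ∀ᶠ z in 𝓝[>] x, slope (fun t ↦ a t * p t + q t) x z < r := by
  have hright : 𝓝[>] x ≤ 𝓝[≠] x := nhdsWithin_mono x fun _ hz ↦ ne_of_gt hz
  have hfrozen : Tendsto (fun z ↦ a z * slope p x z + slope q x z) (𝓝[>] x)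
      (𝓝 (a x * p' + q')) :=
    (((ha.continuousOn x hx).mono_left (nhdsWithin_le_iff.mpr hs)).mul
      (hp.tendsto_slope.mono_left hright)).add (hq.tendsto_slope.mono_left hright)
  filter_upwards [hfrozen.eventually_lt_const (lt_sub_iff_add_lt.mpr hr), hs] with z hz hzs
  have hsplit : slope (fun t ↦ a t * p t + q t) x z =
      a z * slope p x z + slope q x z + slope a x z * p x := by
    simp only [slope_def_field]
    ring
  rw [hsplit]
  linarith [mul_le_mul_of_nonneg_right (ha.slope_le hx hzs) hpx]

theorem mul_add_le_mul_exp_of_lipschitzOnWith {a p q p' q' : ℝ → ℝ} {L : ℝ≥0} {a₀ t₀ t₁ : ℝ}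
    (ha : LipschitzOnWith L a (Icc t₀ t₁)) (ha₀ : 0 < a₀) (ha₀_le : ∀ t ∈ Icc t₀ t₁, a₀ ≤ a t)
    (hp : ∀ t ∈ Icc t₀ t₁, HasDerivAt p (p' t) t) (hq : ∀ t ∈ Icc t₀ t₁, HasDerivAt q (q' t) t)
    (hp₀ : ∀ t ∈ Icc t₀ t₁, 0 ≤ p t) (hq₀ : ∀ t ∈ Icc t₀ t₁, 0 ≤ q t)
    (hbalance : ∀ t ∈ Icc t₀ t₁, a t * p' t + q' t = 0) {t : ℝ} (ht : t ∈ Icc t₀ t₁) :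
    a t * p t + q t ≤ (a t₀ * p t₀ + q t₀) * Real.exp (L / a₀ * (t - t₀)) := by
  have hcont : ContinuousOn (fun t ↦ a t * p t + q t) (Icc t₀ t₁) :=
    (ha.continuousOn.mul fun s hs ↦ (hp s hs).continuousAt.continuousWithinAt).add
      fun s hs ↦ (hq s hs).continuousAt.continuousWithinAt
  have hgronwall := le_gronwallBound_of_liminf_deriv_right_le (f' := fun t ↦ L * p t)
    (K := L / a₀) (ε := 0) hcont ?_ le_rfl ?_ t ht
  · rwa [gronwallBound_ε0] at hgronwall
  · intro x hx r hr
    have hxI := Ico_subset_Icc_self hx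
    refine (eventually_slope_mul_add_lt ha hxI (Icc_mem_nhdsGT_of_mem hx) (hp x hxI) (hq x hxI)
      (hp₀ x hxI) ?_).frequently
    rwa [hbalance x hxI, zero_add]
  · intro x hx
    have hxI := Ico_subset_Icc_self hx
    have hlow : a₀ * p x ≤ a x * p x + q x := by
      linarith [mul_le_mul_of_nonneg_right (ha₀_le x hxI) (hp₀ x hxI), hq₀ x hxI]
    calc (L : ℝ) * p x = L / a₀ * (a₀ * p x) := by field_simp
      _ ≤ L / a₀ * (a x * p x + q x) + 0 := by
        rw [add_zero]; exact mul_le_mul_of_nonneg_left hlow (by positivity)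

theorem stmt_0_general (T a₀ : ℝ) (a : ℝ → ℝ) (L : NNReal)
    (haLip : LipschitzOnWith L a (Icc 0 T))
    (ha₀ : 0 < a₀) (ha : ∀ t ∈ Icc 0 T, a₀ ≤ a t) :
    ∃ C > 0, ∀ β : ℝ, 0 < β → ∀ v v' v'' : ℝ → ℂ,
      (∀ t ∈ Icc 0 T, HasDerivAt v (v' t) t) →
      (∀ t ∈ Icc 0 T, HasDerivAt v' (v'' t) t) →
      (∀ t ∈ Icc 0 T, v'' t + (β : ℂ) ^ 2 * (a t : ℂ) * v t = 0) →
      ∀ t ∈ Icc 0 T,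
        β ^ 2 * ‖v t‖ ^ 2 + ‖v' t‖ ^ 2 ≤
          C * (β ^ 2 * ‖v 0‖ ^ 2 + ‖v' 0‖ ^ 2) := by
  have hmin : 0 < min a₀ 1 := lt_min ha₀ one_pos
  refine ⟨max (a 0) 1 / min a₀ 1 * Real.exp (L / a₀ * T),
    mul_pos (div_pos (lt_max_of_lt_right one_pos) hmin) (Real.exp_pos _), ?_⟩
  intro β _ v v' v'' hv hv' hode t ht
  have hbalance : ∀ s ∈ Icc 0 T,
      a s * (β ^ 2 * (2 * inner ℝ (v s) (v' s))) + 2 * inner ℝ (v' s) (v'' s) = 0 := by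
    intro s hs
    have hv'' : v'' s = (-(β ^ 2 * a s) : ℝ) • v s := by
      rw [Complex.real_smul]; push_cast; linear_combination hode s hs
    rw [hv'', inner_smul_right, real_inner_comm]
    ring
  have henergy := mul_add_le_mul_exp_of_lipschitzOnWith haLip ha₀ ha
    (p := fun s ↦ β ^ 2 * ‖v s‖ ^ 2) (q := fun s ↦ ‖v' s‖ ^ 2)
    (fun s hs ↦ (hv s hs).norm_sq.const_mul _) (fun s hs ↦ (hv' s hs).norm_sq)
    (fun _ _ ↦ by positivity) (fun _ _ ↦ by positivity) hbalance ht
  have hexp : Real.exp (L / a₀ * (t - 0)) ≤ Real.exp (L / a₀ * T) :=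
    Real.exp_le_exp.mpr (mul_le_mul_of_nonneg_left (by linarith [ht.2]) (by positivity))
  have hlow := min_mul_add_le_mul_add (ha t ht) (by positivity : 0 ≤ β ^ 2 * ‖v t‖ ^ 2)
    (by positivity : 0 ≤ ‖v' t‖ ^ 2)
  have hup := mul_add_le_max_mul_add (b := a 0) (by positivity : 0 ≤ β ^ 2 * ‖v 0‖ ^ 2)
    (by positivity : 0 ≤ ‖v' 0‖ ^ 2)
  rw [div_mul_eq_mul_div, div_mul_eq_mul_div, le_div_iff₀ hmin]
  calc (β ^ 2 * ‖v t‖ ^ 2 + ‖v' t‖ ^ 2) * min a₀ 1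
      ≤ (a 0 * (β ^ 2 * ‖v 0‖ ^ 2) + ‖v' 0‖ ^ 2) * Real.exp (L / a₀ * (t - 0)) := by
        linarith
    _ ≤ max (a 0) 1 * (β ^ 2 * ‖v 0‖ ^ 2 + ‖v' 0‖ ^ 2) * Real.exp (L / a₀ * T) := by
        gcongr
    _ = _ := by ring

/-- Case 1 energy estimate for the ODE `v'' + β² a(t) v = 0` with Lipschitz,
strictly positive coefficient `a`. -/
theorem stmt_0 (T a₀ : ℝ) (hT : 0 < T) (a : ℝ → ℝ) (L : NNReal)
    (haLip : LipschitzOnWith L a (Icc 0 T))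
    (ha₀ : 0 < a₀) (ha : ∀ t ∈ Icc 0 T, a₀ ≤ a t) :
    ∃ C > 0, ∀ β : ℝ, 0 < β → ∀ v v' v'' : ℝ → ℂ,
      (∀ t ∈ Icc 0 T, HasDerivAt v (v' t) t) →
      (∀ t ∈ Icc 0 T, HasDerivAt v' (v'' t) t) →
      (∀ t ∈ Icc 0 T, v'' t + (β : ℂ) ^ 2 * (a t : ℂ) * v t = 0) →
      ∀ t ∈ Icc 0 T,
        β ^ 2 * ‖v t‖ ^ 2 + ‖v' t‖ ^ 2 ≤
          C * (β ^ 2 * ‖v 0‖ ^ 2 + ‖v' 0‖ ^ 2) :=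
  stmt_0_general T a₀ a L haLip ha₀ ha
end

section
/- Strictly hyperbolic Hölder energy estimate (Case 2 consequence): let 0 < α < 1, a ∈ C^α([0,T]) with a(t) ≥ a₀ > 0, and 1 ≤ s < 1 + α/(1−α). Then there exist C, K > 0 such that for every β ≥ 1 and every C² solution v of v''(t) + β² a(t) v(t) = 0 on [0,T]: β²|v(t)|² + |v'(t)|² ≤ C e^{K t β^{1/s}} (β²|v(0)|² + |v'(0)|²). -/
/-!
Regularize the coefficient at the scale `ε = β ^ (-1 / (s (1 - α)))`: the moving average `g` over
`[t, t + ε]` of a Hölder extension of `a` satisfies `|g'| ≤ L ε ^ (α - 1) = L β ^ (1 / s)` and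
`β |g - a| ≤ L β ε ^ α ≤ L β ^ (1 / s)`, the last step being exactly `s (1 - α) ≤ 1`. The
approximate energy `β² g |v|² + |v'|²` is comparable to `β² |v|² + |v'|²`, and along solutions its
derivative is `β² g' |v|² + 2 β² (g - a) ⟪v, v'⟫`, which is at most a multiple of `β ^ (1 / s)`
times the energy. Grönwall's inequality concludes.
-/

open Set Real intervalIntegral Filter Topology
open scoped RealInnerProductSpace

theorem continuous_of_abs_sub_le_mul_rpow {f : ℝ → ℝ} {L α : ℝ} (hα : 0 < α)
    (hf : ∀ t τ, |f t - f τ| ≤ L * |t - τ| ^ α) : Continuous f := by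
  refine continuous_iff_continuousAt.2 fun t₀ => tendsto_iff_dist_tendsto_zero.2 ?_
  have hcont : Continuous fun t : ℝ => L * |t - t₀| ^ α :=
    ((continuous_id.sub continuous_const).abs.rpow_const fun _ => Or.inr hα.le).const_mul L
  have hbound : Tendsto (fun t => L * |t - t₀| ^ α) (𝓝 t₀) (𝓝 0) := by
    simpa [zero_rpow hα.ne'] using hcont.tendsto t₀
  exact squeeze_zero (fun _ => dist_nonneg) (fun t => hf t t₀) hbound

theorem exists_extension_of_abs_sub_le_mul_rpow {f : ℝ → ℝ} {a b L α c : ℝ} (hab : a ≤ b)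
    (hc : ∀ t ∈ Icc a b, c ≤ f t)
    (hf : ∀ t ∈ Icc a b, ∀ τ ∈ Icc a b, |f t - f τ| ≤ L * |t - τ| ^ α) (hL : 0 ≤ L)
    (hα : 0 ≤ α) :
    ∃ g : ℝ → ℝ, EqOn g f (Icc a b) ∧ (∀ t, c ≤ g t) ∧
      ∀ t τ, |g t - g τ| ≤ L * |t - τ| ^ α := by
  refine ⟨fun t => f (projIcc a b hab t), fun t ht => by simp [projIcc_of_mem hab ht],
    fun t => hc _ (projIcc a b hab t).2, fun t τ => ?_⟩
  calc |f (projIcc a b hab t) - f (projIcc a b hab τ)|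
      ≤ L * |(projIcc a b hab t : ℝ) - projIcc a b hab τ| ^ α :=
        hf _ (projIcc a b hab t).2 _ (projIcc a b hab τ).2
    _ ≤ L * |t - τ| ^ α :=
      mul_le_mul_of_nonneg_left (rpow_le_rpow (abs_nonneg _) (abs_projIcc_sub_projIcc hab) hα) hL

noncomputable def movingAverage (f : ℝ → ℝ) (ε t : ℝ) : ℝ :=
  ε⁻¹ * ∫ u in t..t + ε, f u

section movingAverage

variable {f : ℝ → ℝ} {ε : ℝ}

theorem hasDerivAt_movingAverage (hf : Continuous f) (t : ℝ) :
    HasDerivAt (movingAverage f ε) (ε⁻¹ * (f (t + ε) - f t)) t := by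
  have hprim (x : ℝ) : HasDerivAt (fun y => ∫ u in (0 : ℝ)..y, f u) (f x) x :=
    hf.integral_hasStrictDerivAt 0 x |>.hasDerivAt
  have heq : movingAverage f ε =
      fun t => ε⁻¹ * ((∫ u in (0 : ℝ)..t + ε, f u) - ∫ u in (0 : ℝ)..t, f u) := by
    ext t
    rw [movingAverage, integral_interval_sub_left (hf.intervalIntegrable _ _)
      (hf.intervalIntegrable _ _)]
  rw [heq]
  exact ((hprim (t + ε)).comp_add_const t ε |>.sub (hprim t)).const_mul ε⁻¹

theorem movingAverage_sub_const (hf : Continuous f) (hε : ε ≠ 0) (t c : ℝ) :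
    movingAverage f ε t - c = ε⁻¹ * ∫ u in t..t + ε, (f u - c) := by
  rw [movingAverage, integral_sub (hf.intervalIntegrable _ _) intervalIntegrable_const,
    integral_const, add_sub_cancel_left, smul_eq_mul, mul_sub, inv_mul_cancel_left₀ hε]

theorem le_movingAverage (hf : Continuous f) (hε : 0 < ε) {c : ℝ} (hc : ∀ u, c ≤ f u)
    (t : ℝ) : c ≤ movingAverage f ε t := by
  rw [← sub_nonneg, movingAverage_sub_const hf hε.ne']
  exact mul_nonneg (inv_nonneg.2 hε.le)
    (integral_nonneg (by linarith) fun u _ => sub_nonneg.2 (hc u))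

theorem abs_movingAverage_sub_le (hf : Continuous f) (hε : 0 < ε) {L α : ℝ} (hL : 0 ≤ L)
    (hα : 0 ≤ α) (hHol : ∀ t τ, |f t - f τ| ≤ L * |t - τ| ^ α) (t : ℝ) :
    |movingAverage f ε t - f t| ≤ L * ε ^ α := by
  have hint : ‖∫ u in t..t + ε, (f u - f t)‖ ≤ L * ε ^ α * |t + ε - t| := by
    refine norm_integral_le_of_norm_le_const fun u hu => ?_
    rw [uIoc_of_le (by linarith)] at hu
    calc ‖f u - f t‖ ≤ L * |u - t| ^ α := hHol u t
      _ ≤ L * ε ^ α := by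
        gcongr
        rw [abs_of_pos (by linarith [hu.1])]
        linarith [hu.2]
  rw [movingAverage_sub_const hf hε.ne', abs_mul, abs_inv, abs_of_pos hε]
  rw [Real.norm_eq_abs, add_sub_cancel_left, abs_of_pos hε] at hint
  calc ε⁻¹ * |∫ u in t..t + ε, (f u - f t)| ≤ ε⁻¹ * (L * ε ^ α * ε) := by gcongr
    _ = L * ε ^ α := by field_simp

end movingAverage

theorem rpow_neg_inv_mul_rpow_sub_one {β s α : ℝ} (hβ : 0 < β) (hs : s ≠ 0) (hα : α ≠ 1) :
    (β ^ (-(s * (1 - α))⁻¹)) ^ (α - 1) = β ^ (1 / s) := by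
  rw [← rpow_mul hβ.le]
  congr 1
  field_simp [sub_ne_zero.2 hα.symm]
  ring

theorem mul_rpow_neg_inv_mul_rpow_le {β s α : ℝ} (hβ : 1 ≤ β) (hs : 0 < s) (hα : α < 1)
    (hsα : s * (1 - α) ≤ 1) :
    β * (β ^ (-(s * (1 - α))⁻¹)) ^ α ≤ β ^ (1 / s) := by
  have hβ0 : 0 < β := by linarith
  have h1α : 1 - α ≠ 0 := by linarith
  have hexp : -(s * (1 - α))⁻¹ * α + 1 = (s * (1 - α) - α) / (s * (1 - α)) := by
    field_simp
    ring
  have hinv : 1 / s = (1 - α) / (s * (1 - α)) := by field_simp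
  rw [← rpow_mul hβ0.le, mul_comm, ← rpow_add_one hβ0.ne', hexp, hinv]
  refine rpow_le_rpow_of_exponent_le hβ ?_
  gcongr

theorem exists_regularization {f : ℝ → ℝ} {L α s c β : ℝ} (hL : 0 ≤ L) (hα : 0 < α)
    (hα1 : α < 1) (hs : 0 < s) (hsα : s * (1 - α) ≤ 1) (hβ : 1 ≤ β)
    (hc : ∀ t, c ≤ f t) (hf : ∀ t τ, |f t - f τ| ≤ L * |t - τ| ^ α) :
    ∃ g g' : ℝ → ℝ, (∀ t, HasDerivAt g (g' t) t) ∧ (∀ t, |g' t| ≤ L * β ^ (1 / s)) ∧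
      (∀ t, β * |g t - f t| ≤ L * β ^ (1 / s)) ∧ (∀ t, |g t - f t| ≤ L) ∧ ∀ t, c ≤ g t := by
  have hfc := continuous_of_abs_sub_le_mul_rpow hα hf
  have hβ0 : 0 < β := by linarith
  set ε := β ^ (-(s * (1 - α))⁻¹)
  have hε : 0 < ε := rpow_pos_of_pos hβ0 _
  have hε1 : ε ≤ 1 := rpow_le_one_of_one_le_of_nonpos hβ
    (neg_nonpos.2 (inv_nonneg.2 (mul_nonneg hs.le (by linarith))))
  have hdist (t : ℝ) : |movingAverage f ε t - f t| ≤ L * ε ^ α :=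
    abs_movingAverage_sub_le hfc hε hL hα.le hf t
  refine ⟨movingAverage f ε, fun t => ε⁻¹ * (f (t + ε) - f t), hasDerivAt_movingAverage hfc,
    fun t => ?_, fun t => ?_, fun t => ?_, le_movingAverage hfc hε hc⟩
  · rw [← rpow_neg_inv_mul_rpow_sub_one hβ0 hs.ne' hα1.ne, abs_mul, abs_inv, abs_of_pos hε,
      rpow_sub_one hε.ne']
    calc ε⁻¹ * |f (t + ε) - f t| ≤ ε⁻¹ * (L * ε ^ α) := by
          gcongr
          simpa [abs_of_pos hε] using hf (t + ε) t
      _ = L * (ε ^ α / ε) := by ring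
  · calc β * |movingAverage f ε t - f t| ≤ β * (L * ε ^ α) := by gcongr; exact hdist t
      _ = L * (β * ε ^ α) := by ring
      _ ≤ L * β ^ (1 / s) := by gcongr; exact mul_rpow_neg_inv_mul_rpow_le hβ hs hα1 hsα
  · calc |movingAverage f ε t - f t| ≤ L * ε ^ α := hdist t
      _ ≤ L * 1 := by gcongr; exact rpow_le_one hε.le hε1 hα.le
      _ = L := mul_one L

section Energy

variable {F : Type*} [NormedAddCommGroup F] [InnerProductSpace ℝ F]

theorem hasDerivAt_energy {v v' v'' : ℝ → F} {G : ℝ → ℝ} {G' q t : ℝ}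
    (hv : HasDerivAt v (v' t) t) (hv' : HasDerivAt v' (v'' t) t) (hG : HasDerivAt G G' t)
    (hode : v'' t = -q • v t) :
    HasDerivAt (fun t => G t * ‖v t‖ ^ 2 + ‖v' t‖ ^ 2)
      (G' * ‖v t‖ ^ 2 + 2 * (G t - q) * ⟪v t, v' t⟫) t := by
  refine ((hG.mul hv.norm_sq).add hv'.norm_sq).congr_deriv ?_
  rw [hode, inner_smul_right, real_inner_comm]
  ring

theorem abs_energy_deriv_le (x y : F) {β G G' q Λ : ℝ} (hβ : 0 ≤ β) (hΛ : 0 ≤ Λ)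
    (hG' : |G'| ≤ β ^ 2 * Λ) (hGq : |G - q| ≤ β * Λ) :
    |G' * ‖x‖ ^ 2 + 2 * (G - q) * ⟪x, y⟫| ≤ 2 * Λ * (β ^ 2 * ‖x‖ ^ 2 + ‖y‖ ^ 2) := by
  have hxy : |⟪x, y⟫| ≤ ‖x‖ * ‖y‖ := abs_real_inner_le_norm x y
  have hamgm : 2 * (β * ‖x‖) * ‖y‖ ≤ β ^ 2 * ‖x‖ ^ 2 + ‖y‖ ^ 2 := by
    nlinarith [sq_nonneg (β * ‖x‖ - ‖y‖)]
  calc |G' * ‖x‖ ^ 2 + 2 * (G - q) * ⟪x, y⟫|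
      ≤ |G'| * ‖x‖ ^ 2 + 2 * |G - q| * |⟪x, y⟫| := by
        refine (abs_add_le _ _).trans ?_
        rw [abs_mul, abs_mul, abs_mul, abs_two, abs_sq]
    _ ≤ β ^ 2 * Λ * ‖x‖ ^ 2 + 2 * (β * Λ) * (‖x‖ * ‖y‖) := by gcongr
    _ = Λ * (β ^ 2 * ‖x‖ ^ 2) + Λ * (2 * (β * ‖x‖) * ‖y‖) := by ring
    _ ≤ Λ * (β ^ 2 * ‖x‖ ^ 2 + ‖y‖ ^ 2) + Λ * (β ^ 2 * ‖x‖ ^ 2 + ‖y‖ ^ 2) := by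
        gcongr
        linarith [sq_nonneg ‖y‖]
    _ = 2 * Λ * (β ^ 2 * ‖x‖ ^ 2 + ‖y‖ ^ 2) := by ring

theorem energy_le_of_approx_coeff {v v' v'' : ℝ → F} {g g' q : ℝ → ℝ} {T β Λ κ c M : ℝ}
    (hβ : 0 ≤ β) (hΛ : 0 ≤ Λ) (hc : 0 < c) (hc1 : c ≤ 1) (hκ : 2 * Λ ≤ κ * c)
    (hv : ∀ t ∈ Icc 0 T, HasDerivAt v (v' t) t) (hv' : ∀ t ∈ Icc 0 T, HasDerivAt v' (v'' t) t)
    (hode : ∀ t ∈ Icc 0 T, v'' t = -(β ^ 2 * q t) • v t)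
    (hg : ∀ t ∈ Icc 0 T, HasDerivAt g (g' t) t) (hg' : ∀ t ∈ Icc 0 T, |g' t| ≤ Λ)
    (hgq : ∀ t ∈ Icc 0 T, β * |g t - q t| ≤ Λ) (hgc : ∀ t ∈ Icc 0 T, c ≤ g t)
    (hgM : g 0 ≤ M) :
    ∀ t ∈ Icc 0 T, β ^ 2 * ‖v t‖ ^ 2 + ‖v' t‖ ^ 2 ≤
      max M 1 / c * exp (κ * t) * (β ^ 2 * ‖v 0‖ ^ 2 + ‖v' 0‖ ^ 2) := by
  intro t ht
  set E : ℝ → ℝ := fun τ => β ^ 2 * g τ * ‖v τ‖ ^ 2 + ‖v' τ‖ ^ 2 with hE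
  set N : ℝ → ℝ := fun τ => β ^ 2 * ‖v τ‖ ^ 2 + ‖v' τ‖ ^ 2 with hN
  set D : ℝ → ℝ := fun τ =>
    β ^ 2 * g' τ * ‖v τ‖ ^ 2 + 2 * (β ^ 2 * g τ - β ^ 2 * q τ) * ⟪v τ, v' τ⟫
  have hN0 (τ : ℝ) : 0 ≤ N τ := by positivity
  have hNE (τ : ℝ) (hτ : τ ∈ Icc 0 T) : c * N τ ≤ E τ := by
    have := hgc τ hτ
    simp only [hE, hN]
    nlinarith [sq_nonneg (β * ‖v τ‖), sq_nonneg ‖v' τ‖]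
  have hE0 : E 0 ≤ max M 1 * N 0 := by
    have := hgM.trans (le_max_left M 1)
    simp only [hE, hN]
    nlinarith [le_max_right M 1, sq_nonneg (β * ‖v 0‖), sq_nonneg ‖v' 0‖]
  have hderiv (τ : ℝ) (hτ : τ ∈ Icc 0 T) : HasDerivAt E (D τ) τ :=
    hasDerivAt_energy (hv τ hτ) (hv' τ hτ) ((hg τ hτ).const_mul _) (hode τ hτ)
  have hκ0 : 0 ≤ κ := nonneg_of_mul_nonneg_left (by linarith) hc
  have hE_nonneg (τ : ℝ) (hτ : τ ∈ Icc 0 T) : 0 ≤ E τ :=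
    (mul_nonneg hc.le (hN0 τ)).trans (hNE τ hτ)
  have hbound (τ : ℝ) (hτ : τ ∈ Icc 0 T) : ‖D τ‖ ≤ κ * ‖E τ‖ := by
    have hG' : |β ^ 2 * g' τ| ≤ β ^ 2 * Λ := by
      rw [abs_mul, abs_sq]
      exact mul_le_mul_of_nonneg_left (hg' τ hτ) (sq_nonneg β)
    have hGq : |β ^ 2 * g τ - β ^ 2 * q τ| ≤ β * Λ := by
      rw [← mul_sub, abs_mul, abs_sq, sq, mul_assoc]
      exact mul_le_mul_of_nonneg_left (hgq τ hτ) hβ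
    rw [Real.norm_eq_abs, Real.norm_eq_abs, abs_of_nonneg (hE_nonneg τ hτ)]
    calc |D τ| ≤ 2 * Λ * N τ := abs_energy_deriv_le _ _ hβ hΛ hG' hGq
      _ ≤ κ * (c * N τ) := by nlinarith [hN0 τ]
      _ ≤ κ * E τ := by gcongr; exact hNE τ hτ
  have h0 : (0 : ℝ) ∈ Icc 0 T := ⟨le_rfl, ht.1.trans ht.2⟩
  have hgr := norm_le_gronwallBound_of_norm_deriv_right_le (ε := 0)
    (fun τ hτ => (hderiv τ hτ).continuousAt.continuousWithinAt)
    (fun τ hτ => (hderiv τ (Ico_subset_Icc_self hτ)).hasDerivWithinAt) le_rfl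
    (fun τ hτ => by simpa using hbound τ (Ico_subset_Icc_self hτ)) t ht
  rw [gronwallBound_ε0, sub_zero, Real.norm_eq_abs, Real.norm_eq_abs,
    abs_of_nonneg (hE_nonneg 0 h0)] at hgr
  calc N t ≤ E t / c := (le_div_iff₀' hc).2 (hNE t ht)
    _ ≤ E 0 * exp (κ * t) / c := by gcongr; exact (le_abs_self _).trans hgr
    _ ≤ max M 1 * N 0 * exp (κ * t) / c := by gcongr
    _ = max M 1 / c * exp (κ * t) * N 0 := by ring

end Energy

/-- Case 2 energy estimate: for `a ∈ C^α([0,T])` with `a ≥ a₀ > 0` and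
`1 ≤ s < 1 + α/(1−α)`, there exist `C, K > 0` such that every `C²` solution of
`v'' + β² a v = 0` satisfies
`β²|v(t)|² + |v'(t)|² ≤ C e^{Ktβ^{1/s}} (β²|v(0)|² + |v'(0)|²)`. -/
theorem stmt_19 (T α s L a₀ : ℝ) (hT : 0 < T) (hα : 0 < α) (hα1 : α < 1)
    (ha₀ : 0 < a₀) (a : ℝ → ℝ) (ha : ∀ t ∈ Icc 0 T, a₀ ≤ a t)
    (haHol : ∀ t ∈ Icc 0 T, ∀ τ ∈ Icc 0 T, |a t - a τ| ≤ L * |t - τ| ^ α)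
    (hs : 1 ≤ s) (hs' : s < 1 + α / (1 - α)) :
    ∃ C > 0, ∃ K > 0, ∀ β : ℝ, 1 ≤ β → ∀ v v' v'' : ℝ → ℂ,
      (∀ t ∈ Icc 0 T, HasDerivAt v (v' t) t) →
      (∀ t ∈ Icc 0 T, HasDerivAt v' (v'' t) t) →
      (∀ t ∈ Icc 0 T, v'' t + (β : ℂ) ^ 2 * (a t : ℂ) * v t = 0) →
      ∀ t ∈ Icc 0 T,
        β ^ 2 * ‖v t‖ ^ 2 + ‖v' t‖ ^ 2 ≤
          C * Real.exp (K * t * β ^ (1 / s)) *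
            (β ^ 2 * ‖v 0‖ ^ 2 + ‖v' 0‖ ^ 2) := by
  have hL : 0 ≤ L := by
    have := (abs_nonneg _).trans (haHol 0 ⟨le_rfl, hT.le⟩ T ⟨hT.le, le_rfl⟩)
    rw [zero_sub, abs_neg, abs_of_pos hT] at this
    exact nonneg_of_mul_nonneg_left this (rpow_pos_of_pos hT α)
  have hsα : s * (1 - α) ≤ 1 := by
    rw [one_add_div (by linarith), sub_add_cancel, lt_div_iff₀ (by linarith)] at hs'
    exact hs'.le
  obtain ⟨b, hba, hb₀, hbHol⟩ :=
    exists_extension_of_abs_sub_le_mul_rpow hT.le ha haHol hL hα.le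
  set c := min a₀ 1
  have hc : 0 < c := lt_min ha₀ one_pos
  refine ⟨max (a 0 + L) 1 / c, by positivity, 2 * L / c + 1, by positivity, ?_⟩
  intro β hβ v v' v'' hv hv' hode t ht
  obtain ⟨g, g', hg, hg', hgb, hgb', hgc⟩ :=
    exists_regularization hL hα hα1 (by linarith) hsα hβ hb₀ hbHol
  have hB : 0 < β ^ (1 / s) := rpow_pos_of_pos (by linarith) _
  have h0 : (0 : ℝ) ∈ Icc 0 T := ⟨le_rfl, hT.le⟩
  have hκ : 2 * (L * β ^ (1 / s)) ≤ (2 * L / c + 1) * β ^ (1 / s) * c := by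
    field_simp
    linarith [mul_pos hB hc]
  refine (energy_le_of_approx_coeff (by linarith) (mul_nonneg hL hB.le) hc (min_le_right _ _) hκ
    hv hv' (fun t ht => ?_) (fun t _ => hg t) (fun t _ => hg' t) (fun t ht => hba ht ▸ hgb t)
    (fun t _ => (min_le_left _ _).trans (hgc t)) (M := a 0 + L) ?_ t ht).trans_eq ?_
  · rw [Complex.real_smul]
    push_cast
    linear_combination hode t ht
  · have := hgb' 0
    rw [hba h0] at this
    linarith [le_abs_self (g 0 - a 0)]
  · ring_nf
end
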